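/- Let q ∈ F^× be an element that is not a root of unity, and let V be the F_(q)-module with basis {v_i : i ∈ ℤ}, a∘v_i = v_{i-1}, x∘v_i = q^i v_{i+1}. Then every F_(q)-module endomorphism of V is a scalar multiple of the identity. -/

import Mathlib

/-!
The composite `x ∘ a` acts diagonally, `v_i ↦ q^(i-1) v_i`, and since `q` is not a root of unity
its eigenvalues are pairwise distinct. An endomorphism commuting with `x ∘ a` therefore preserves
each line `F v_i`, so it is diagonal, `v_i ↦ c_i v_i`; commuting with the shift `a` forces
`c_{i-1} = c_i`, so `c` is constant.
-/

open Function Finsupp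

theorem zpow_injective_of_pow_ne_one {G : Type*} [GroupWithZero G] {q : G} (hq : q ≠ 0)
    (hroot : ∀ m : ℕ, 1 ≤ m → q ^ m ≠ 1) : Injective fun n : ℤ => q ^ n := by
  have hfin : ¬IsOfFinOrder (Units.mk0 q hq) := by
    rw [isOfFinOrder_iff_pow_eq_one]
    rintro ⟨m, hm, h⟩
    exact hroot m hm (by simpa [Units.ext_iff] using h)
  intro m n h
  apply injective_zpow_iff_not_isOfFinOrder.mpr hfin
  simpa [Units.ext_iff] using h

theorem Int.apply_eq_apply_zero_of_apply_sub_one {α : Type*} {c : ℤ → α}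
    (h : ∀ i, c (i - 1) = c i) (i : ℤ) : c i = c 0 := by
  induction i using Int.induction_on with
  | zero => rfl
  | succ n ih => rw [← ih, ← h, add_sub_cancel_right]
  | pred n ih => rw [h, ih]

namespace Finsupp

variable {ι R : Type*} [CommSemiring R]

noncomputable def diagLinearMap (μ : ι → R) : (ι →₀ R) →ₗ[R] (ι →₀ R) :=
  lsum R fun i => μ i • lsingle i

@[simp]
theorem diagLinearMap_single (μ : ι → R) (i : ι) (a : R) :
    diagLinearMap μ (single i a) = single i (μ i * a) := by
  simp [diagLinearMap, smul_single]

@[simp]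
theorem diagLinearMap_apply (μ : ι → R) (w : ι →₀ R) (j : ι) :
    diagLinearMap μ w j = μ j * w j := by
  induction w using Finsupp.induction_linear with
  | zero => simp
  | add v w hv hw => simp [hv, hw, mul_add]
  | single i a => by_cases hij : i = j <;> simp [hij]

theorem diagLinearMap_const (c : R) : diagLinearMap (fun _ : ι => c) = c • LinearMap.id := by
  ext i : 2
  simp

theorem apply_eq_of_diagLinearMap_comp_lmapDomain {c : ι → R} {e : ι → ι}
    (h : diagLinearMap c ∘ₗ lmapDomain R R e = lmapDomain R R e ∘ₗ diagLinearMap c) (i : ι) :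
    c (e i) = c i := by
  have := congr($h (single i 1))
  exact single_injective (e i) (by simpa using this)

variable [IsDomain R]

theorem eq_single_of_diagLinearMap_eq_smul {μ : ι → R} (hμ : Injective μ) {w : ι →₀ R} {k : ι}
    (hw : diagLinearMap μ w = μ k • w) : w = single k (w k) := by
  classical
  ext j
  by_cases hjk : j = k
  · subst hjk; simp
  · rw [single_apply, if_neg (Ne.symm hjk)]
    by_contra hne
    have := congr($hw j)
    simp only [diagLinearMap_apply, smul_apply, smul_eq_mul] at this
    exact hjk (hμ (mul_right_cancel₀ hne this))

theorem exists_eq_diagLinearMap_of_commute {μ : ι → R} (hμ : Injective μ)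
    {φ : Module.End R (ι →₀ R)} (hφ : Commute φ (diagLinearMap μ)) :
    ∃ c : ι → R, φ = diagLinearMap c := by
  refine ⟨fun k => φ (single k 1) k, ?_⟩
  ext k : 2
  have heigen : diagLinearMap μ (φ (single k 1)) = μ k • φ (single k 1) := by
    have := congr($hφ (single k 1))
    simp only [Module.End.mul_apply, diagLinearMap_single, mul_one] at this
    rw [← this, ← smul_single_one, map_smul]
  rw [LinearMap.comp_apply, lsingle_apply, eq_single_of_diagLinearMap_eq_smul hμ heigen]
  simp

end Finsupp

/-- If `q` is not a root of unity, every `F_(q)`-module endomorphism of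
`V = ⊕_{i∈ℤ} F v_i` (with `a∘v_i = v_{i-1}`, `x∘v_i = q^i v_{i+1}`) is scalar. -/
theorem stmt_6 (F : Type*) [Field F] (q : F) (hq : q ≠ 0)
    (hroot : ∀ m : ℕ, 1 ≤ m → q ^ m ≠ 1)
    (φ : (ℤ →₀ F) →ₗ[F] (ℤ →₀ F))
    (hA : ∀ v : ℤ →₀ F,
      φ (Finsupp.lmapDomain F F (fun i : ℤ => i - 1) v)
        = Finsupp.lmapDomain F F (fun i : ℤ => i - 1) (φ v))
    (hX : ∀ v : ℤ →₀ F,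
      φ (Finsupp.lsum F (fun i : ℤ => (q ^ i : F) • Finsupp.lsingle (R := F) (M := F) (i + 1)) v)
        = Finsupp.lsum F (fun i : ℤ => (q ^ i : F) • Finsupp.lsingle (R := F) (M := F) (i + 1)) (φ v)) :
    ∃ c : F, φ = c • LinearMap.id := by
  set a := lmapDomain F F fun i : ℤ => i - 1
  set x := lsum F fun i : ℤ => (q ^ i : F) • lsingle (R := F) (M := F) (i + 1)
  have hxa : x * a = diagLinearMap fun i => q ^ (i - 1) := by
    ext i : 2
    simp [a, x]
  have hcomm : Commute φ (diagLinearMap fun i : ℤ => q ^ (i - 1)) :=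
    hxa ▸ Commute.mul_right (LinearMap.ext hX) (LinearMap.ext hA)
  obtain ⟨c, hc⟩ := exists_eq_diagLinearMap_of_commute
    ((zpow_injective_of_pow_ne_one hq hroot).comp (sub_left_injective (b := 1))) hcomm
  have hshift : ∀ i : ℤ, c (i - 1) = c i :=
    apply_eq_of_diagLinearMap_comp_lmapDomain (hc ▸ LinearMap.ext hA)
  refine ⟨c 0, ?_⟩
  rw [hc, funext (Int.apply_eq_apply_zero_of_apply_sub_one hshift), diagLinearMap_const]
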